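/- Let A and B be unital associative ℂ-algebras, σ : B → ℂ a linear functional, and η_σ : A ⊗ B → A the linear map with η_σ(a ⊗ b) = σ(b)·a. Let Θ be an algebra automorphism of A ⊗ B, α an algebra automorphism of A, β an algebra automorphism of B, and set υ := α ⊗ β. Define the induced observable map ε_σ(b) := η_σ(Θ(1 ⊗ b)) and, for the transformed scattering map Θ' := υ ∘ Θ ∘ υ⁻¹, the transformed induced observable map ε'_σ(b) := η_σ(Θ'(1 ⊗ b)). Then for every b ∈ B one has ε'_σ(β(b)) = α(ε_{σ∘β}(b)). -/
import Mathlib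

open TensorProduct

theorem stmt1 {A B : Type*} [Ring A] [Ring B] [Algebra ℂ A] [Algebra ℂ B]
    (σ : B →ₗ[ℂ] ℂ) (α : A ≃ₐ[ℂ] A) (β : B ≃ₐ[ℂ] B)
    (η ηβ : A ⊗[ℂ] B →ₗ[ℂ] A)
    (hη : ∀ (a : A) (b : B), η (a ⊗ₜ[ℂ] b) = σ b • a)
    (hηβ : ∀ (a : A) (b : B), ηβ (a ⊗ₜ[ℂ] b) = σ (β b) • a)
    (Θ : A ⊗[ℂ] B ≃ₐ[ℂ] A ⊗[ℂ] B) :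
    ∀ b : B,
      η ((Algebra.TensorProduct.congr α β)
          (Θ ((Algebra.TensorProduct.congr α β).symm ((1 : A) ⊗ₜ[ℂ] β b))))
        = α (ηβ (Θ ((1 : A) ⊗ₜ[ℂ] b))) := by
  intro b
  have hsymm : (Algebra.TensorProduct.congr α β).symm ((1 : A) ⊗ₜ[ℂ] β b)
      = (1 : A) ⊗ₜ[ℂ] b := by
    simp [Algebra.TensorProduct.congr]
  rw [hsymm]
  induction Θ ((1 : A) ⊗ₜ[ℂ] b) using TensorProduct.induction_on with
  | zero => simp
  | tmul a c => simp [Algebra.TensorProduct.congr_apply, hη, hηβ]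
  | add x y hx hy =>
    simp only [Algebra.TensorProduct.congr_apply] at hx hy
    simp [map_add, hx, hy]
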